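/- arXiv:1702.06081 — 8 statements merged into one kernel-verified Lean document; each statement's English description precedes it below -/
import Mathlib

section
/- For the distribution D_ε on {0,1}³ with P(Y=1)=1/2, P(A=y|Y=y)=1−ε, P(X=y|Y=y)=1−2ε (X and A conditionally independent given Y), and 0<ε<1/4, the Bayes optimal predictor of Y from (X,A) under 0-1 loss is h(x,a)=a; i.e., for all x,a∈{0,1}, P(Y=a | X=x, A=a) > 1/2. -/
/-- The joint pmf of `(X, A, Y)` under `D_ε`: `Y` uniform on `{0,1}`, and conditioned on `Y`,
`X` and `A` independent with `P(A = Y) = 1 - ε` and `P(X = Y) = 1 - 2ε`. -/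
noncomputable def pD (ε : ℝ) (x a y : Bool) : ℝ :=
  (1 / 2) * (if a = y then 1 - ε else ε) * (if x = y then 1 - 2 * ε else 2 * ε)

/-! The posterior of `Y = a` exceeds `1/2` exactly when the joint weight of `y = a` beats that of
`y = !a`. If `x = a` this reads `(1 - ε)(1 - 2ε) > 2ε²`, true for `ε < 1/3`; if `x ≠ a` it reads
`(1 - ε) 2ε > ε (1 - 2ε)`, true for every `ε > 0`. -/

theorem half_lt_div_add_of_lt {K : Type*} [Field K] [LinearOrder K] [IsStrictOrderedRing K]
    {p q : K} (hq : 0 ≤ q) (hqp : q < p) : 1 / 2 < p / (p + q) := by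
  rw [lt_div_iff₀ (by linarith)]
  linarith

theorem pD_nonneg {ε : ℝ} (hε0 : 0 ≤ ε) (hε1 : ε ≤ 1 / 2) (x a y : Bool) : 0 ≤ pD ε x a y := by
  unfold pD
  have h1 : 0 ≤ 1 - ε := by linarith
  have h2 : 0 ≤ 1 - 2 * ε := by linarith
  split_ifs <;> positivity

theorem pD_not_lt_pD {ε : ℝ} (hε0 : 0 < ε) (hε1 : ε < 1 / 4) (x a : Bool) :
    pD ε x a (!a) < pD ε x a a := by
  cases x <;> cases a <;> simp only [pD] <;> norm_num <;> nlinarith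

/-- Under `D_ε` with `0 < ε < 1/4`, for all `x, a ∈ {0,1}` we have
`P(Y = a | X = x, A = a) > 1/2`, i.e. the Bayes optimal predictor of `Y` from `(X, A)`
under 0-1 loss is `h(x, a) = a`. -/
theorem stmt0 (ε : ℝ) (hε0 : 0 < ε) (hε1 : ε < 1 / 4) (x a : Bool) :
    pD ε x a a / (pD ε x a false + pD ε x a true) > 1 / 2 := by
  have hsum : pD ε x a false + pD ε x a true = pD ε x a a + pD ε x a (!a) := by
    cases a
    · rfl
    · exact add_comm _ _
  rw [hsum]
  exact half_lt_div_add_of_lt (pD_nonneg hε0.le (by linarith) x a (!a)) (pD_not_lt_pD hε0 hε1 x a)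
end

section
/- Under D_ε, the predictor Ŷ=A has group-conditional rates γ_{y0}(Ŷ)=0 and γ_{y1}(Ŷ)=1 for both y∈{0,1}; hence any non-discriminatory (equalized odds) predictor derived only from (Ŷ,A)=(A,A) must be independent of Y, and therefore every such derived binary predictor has 0-1 loss at least 1/2. -/
lemma sum_pD_eq (ε : ℝ) (a y : Bool) :
    ∑ x : Bool, pD ε x a y = 1 / 2 * (if a = y then 1 - ε else ε) := by
  cases a <;> cases y <;> simp [pD] <;> ring

lemma sum_pD_ne_zero {ε : ℝ} (h0 : ε ≠ 0) (h1 : ε ≠ 1) (a y : Bool) :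
    ∑ x : Bool, pD ε x a y ≠ 0 := by
  rw [sum_pD_eq]
  split_ifs <;> simp [sub_eq_zero, h0, h1.symm]

lemma sum_sum_pD_eq_half (ε : ℝ) (y : Bool) : ∑ x : Bool, ∑ a : Bool, pD ε x a y = 1 / 2 := by
  rw [Finset.sum_comm]
  simp only [sum_pD_eq]
  cases y <;> simp <;> ring

lemma sum_pD_const_loss (ε c : ℝ) :
    ∑ x : Bool, ∑ a : Bool, ∑ y : Bool, pD ε x a y * (if y then 1 - c else c) = 1 / 2 := by
  have hY : ∑ y : Bool, (∑ x : Bool, ∑ a : Bool, pD ε x a y) * (if y then 1 - c else c) = 1 / 2 := by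
    simp only [sum_sum_pD_eq_half]
    simp only [Fintype.sum_bool, if_true, Bool.false_eq_true, if_false]
    ring
  rw [← hY]
  simp only [Finset.sum_mul]
  exact (Finset.sum_congr rfl fun x _ => Finset.sum_comm).trans Finset.sum_comm

theorem stmt2_general (ε : ℝ) (hε0 : 0 < ε) (hε1 : ε < 1 / 4)
    (q : Bool → ℝ)
    (hnd : q false = q true) :
    (∀ y a : Bool,
      (∑ x : Bool, pD ε x a y * (if a then 1 else 0)) / (∑ x : Bool, pD ε x a y)
        = if a then 1 else 0) ∧
    (1 / 2 : ℝ) ≤ ∑ x : Bool, ∑ a : Bool, ∑ y : Bool,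
      pD ε x a y * (if y then 1 - q a else q a) := by
  refine ⟨fun y a => ?_, ?_⟩
  · rw [← Finset.sum_mul]
    exact mul_div_cancel_left₀ _ (sum_pD_ne_zero hε0.ne' (by linarith) a y)
  · have hq : q = fun _ => q true := funext fun a => by cases a <;> simp [hnd]
    rw [hq, sum_pD_const_loss]

/-- Under `D_ε`, the predictor `Ŷ = A` has group-conditional rates `γ_{y0} = 0` and
`γ_{y1} = 1`.  Moreover, any randomized binary predictor derived only from `(Ŷ, A) = (A, A)`
(given by `q a = P(Ỹ = 1 | A = a)`) which is non-discriminatory (equalized odds, i.e.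
`q false = q true`) has 0-1 loss at least `1/2`. -/
theorem stmt2 (ε : ℝ) (hε0 : 0 < ε) (hε1 : ε < 1 / 4)
    (q : Bool → ℝ) (hq0 : ∀ a, 0 ≤ q a) (hq1 : ∀ a, q a ≤ 1)
    (hnd : q false = q true) :
    (∀ y a : Bool,
      (∑ x : Bool, pD ε x a y * (if a then 1 else 0)) / (∑ x : Bool, pD ε x a y)
        = if a then 1 else 0) ∧
    (1 / 2 : ℝ) ≤ ∑ x : Bool, ∑ a : Bool, ∑ y : Bool,
      pD ε x a y * (if y then 1 - q a else q a) :=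
  stmt2_general ε hε0 hε1 q hnd
end

section
/- Let γ^S_{ya} be the empirical conditional mean of a binary predictor h over n i.i.d. samples, with n_{ya} counting samples with Y=y, A=a, and p_{ya}=P(Y=y,A=a). If n p_{ya} > 8 log(8/δ) for all (y,a) and δ∈(0,1/2), then with probability at least 1−δ, |Γ(h) − Γ^S(h)| ≤ 2 max_{ya} sqrt(log(16/δ)/(n p_{ya})), where Γ(h)=max_y |γ_{y0}−γ_{y1}| and Γ^S analogously with empirical rates. -/
open MeasureTheory

variable {𝒳 : Type*} [MeasurableSpace 𝒳]

/-- `p_{ya} = P(Y = y, A = a)` for a distribution `ν` over `(x, a, y)` triples. -/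
noncomputable def pYA (ν : Measure (𝒳 × Bool × Bool)) (y a : Bool) : ℝ :=
  (ν {p | p.2.2 = y ∧ p.2.1 = a}).toReal

/-- Population group-conditional positive rate `γ_{ya}(h) = P(h = 1 | Y = y, A = a)`. -/
noncomputable def gammaPop (ν : Measure (𝒳 × Bool × Bool)) (h : 𝒳 → Bool → Bool)
    (y a : Bool) : ℝ :=
  (ν {p | h p.1 p.2.1 = true ∧ p.2.2 = y ∧ p.2.1 = a}).toReal / pYA ν y a

/-- Population discrimination `Γ(h) = max_y |γ_{y0}(h) - γ_{y1}(h)|`. -/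
noncomputable def GammaPop (ν : Measure (𝒳 × Bool × Bool)) (h : 𝒳 → Bool → Bool) : ℝ :=
  max |gammaPop ν h false false - gammaPop ν h false true|
      |gammaPop ν h true false - gammaPop ν h true true|

/-- Empirical group-conditional rate on a sample `s`. -/
noncomputable def gammaEmp {n : ℕ} (s : Fin n → 𝒳 × Bool × Bool) (h : 𝒳 → Bool → Bool)
    (y a : Bool) : ℝ :=
  (∑ i, if h (s i).1 (s i).2.1 = true ∧ (s i).2.2 = y ∧ (s i).2.1 = a then (1 : ℝ) else 0)
    / (∑ i, if (s i).2.2 = y ∧ (s i).2.1 = a then (1 : ℝ) else 0)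

/-- Empirical discrimination `Γ^S(h)`. -/
noncomputable def GammaEmp {n : ℕ} (s : Fin n → 𝒳 × Bool × Bool) (h : 𝒳 → Bool → Bool) : ℝ :=
  max |gammaEmp s h false false - gammaEmp s h false true|
      |gammaEmp s h true false - gammaEmp s h true true|


section Aux
open ProbabilityTheory Real
open scoped ENNReal


/-- Hoeffding's lemma for a Bernoulli(γ) variable. -/
lemma hoeff_bern {γ : ℝ} (h0 : 0 ≤ γ) (h1 : γ ≤ 1) (s : ℝ) :
    Real.log (1 - γ + γ * Real.exp s) ≤ γ * s + s ^ 2 / 8 := by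
  set v : ℝ → ℝ := fun u => 1 - γ + γ * Real.exp u with hv_def
  have hv : ∀ u, 0 < v u := by
    intro u
    rcases eq_or_lt_of_le h0 with h | h
    · simp [hv_def, ← h]
    · have := mul_pos h (exp_pos u)
      simp only [hv_def]; nlinarith
  -- φ u = γ u + u²/8 - log (v u), want 0 ≤ φ s
  set φ : ℝ → ℝ := fun u => γ * u + u ^ 2 / 8 - Real.log (v u) with hφ_def
  set ψ : ℝ → ℝ := fun u => γ + u / 4 - γ * Real.exp u / v u with hψ_def
  have hvd : ∀ u, HasDerivAt v (γ * Real.exp u) u := by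
    intro u
    exact ((Real.hasDerivAt_exp u).const_mul γ).const_add (1 - γ)
  have hφd : ∀ u, HasDerivAt φ (ψ u) u := by
    intro u
    have hlog : HasDerivAt (fun u => Real.log (v u)) (γ * Real.exp u / v u) u :=
      (hvd u).log (hv u).ne'
    have h1' : HasDerivAt (fun u => γ * u + u ^ 2 / 8) (γ + u / 4) u := by
      have := ((hasDerivAt_id u).const_mul γ).add
        (((hasDerivAt_pow 2 u)).div_const 8)
      refine this.congr_deriv ?_
      ring
    exact h1'.sub hlog
  have hψd : ∀ u, HasDerivAt ψ (1 / 4 - γ * Real.exp u * (1 - γ) / (v u) ^ 2) u := by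
    intro u
    have hnum : HasDerivAt (fun u => γ * Real.exp u) (γ * Real.exp u) u :=
      (Real.hasDerivAt_exp u).const_mul γ
    have hdiv : HasDerivAt (fun u => γ * Real.exp u / v u)
        ((γ * Real.exp u * v u - γ * Real.exp u * (γ * Real.exp u)) / (v u) ^ 2) u :=
      hnum.div (hvd u) (hv u).ne'
    have h1' : HasDerivAt (fun u => γ + u / 4) (1 / 4) u := by
      simpa using ((hasDerivAt_id u).div_const 4).const_add γ
    have := h1'.sub hdiv
    refine this.congr_deriv ?_
    have hvu : v u = 1 - γ + γ * Real.exp u := rfl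
    rw [hvu]
    ring_nf
  have hψmono : Monotone ψ := by
    refine monotone_of_deriv_nonneg (fun u => (hψd u).differentiableAt) ?_
    intro u
    rw [(hψd u).deriv]
    have hVpos := hv u
    have ha : 0 ≤ γ * Real.exp u := mul_nonneg h0 (exp_pos u).le
    have key : γ * Real.exp u * (1 - γ) / (v u) ^ 2 ≤ 1 / 4 := by
      rw [div_le_iff₀ (by positivity)]
      have hvu : v u = 1 - γ + γ * Real.exp u := rfl
      nlinarith [sq_nonneg (γ * Real.exp u - (1 - γ))]
    linarith
  have hψ0 : ψ 0 = 0 := by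
    simp only [hψ_def]
    have : v 0 = 1 := by simp [hv_def]
    rw [this]
    simp
  have hφ0 : φ 0 = 0 := by
    have : v 0 = 1 := by simp [hv_def]
    simp [hφ_def, this]
  have hφdiff : Differentiable ℝ φ := fun u => (hφd u).differentiableAt
  have hφs : 0 ≤ φ s := by
    rcases le_total 0 s with hs | hs
    · have hmono : MonotoneOn φ (Set.Ici (0:ℝ)) := by
        refine monotoneOn_of_deriv_nonneg (convex_Ici 0) hφdiff.continuous.continuousOn
          (hφdiff.differentiableOn) ?_
        intro u hu
        rw [(hφd u).deriv]
        have : (0:ℝ) ≤ u := le_of_lt (by simpa using hu)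
        have := hψmono this
        rw [hψ0] at this
        linarith
      have := hmono (Set.self_mem_Ici) (Set.mem_Ici.2 hs) hs
      linarith [hφ0]
    · have hanti : AntitoneOn φ (Set.Iic (0:ℝ)) := by
        refine antitoneOn_of_deriv_nonpos (convex_Iic 0) hφdiff.continuous.continuousOn
          (hφdiff.differentiableOn) ?_
        intro u hu
        rw [(hφd u).deriv]
        have : u ≤ (0:ℝ) := le_of_lt (by simpa using hu)
        have := hψmono this
        rw [hψ0] at this
        linarith
      have := hanti (Set.mem_Iic.2 hs) (Set.self_mem_Iic) hs
      linarith [hφ0]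
  have : Real.log (v s) ≤ γ * s + s ^ 2 / 8 := by
    have := hφs
    simp only [hφ_def] at this
    linarith
  simpa [hv_def] using this



lemma chernoff_ge {Ω : Type*} [MeasurableSpace Ω] (μ : Measure Ω) [IsProbabilityMeasure μ]
    {n : ℕ} (V : Fin n → Ω → ℝ) (hVmeas : ∀ i, Measurable (V i))
    (hind : iIndepFun V μ)
    (C : ℝ) (hC : ∀ i ω, |V i ω| ≤ C)
    {s : ℝ} (hs : 0 ≤ s) (M : ℝ) (hM : ∀ i, mgf (V i) μ s ≤ M)
    (ε : ℝ) :
    (μ {ω | ε ≤ ∑ i, V i ω}).toReal ≤ Real.exp (-s * ε) * M ^ n := by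
  have hint : ∀ i, Integrable (fun ω => Real.exp (s * V i ω)) μ := by
    intro i
    refine Integrable.mono' (integrable_const (Real.exp (|s| * C)))
      (((hVmeas i).const_mul s).exp.aestronglyMeasurable) (ae_of_all _ fun ω => ?_)
    rw [Real.norm_eq_abs, Real.abs_exp]
    refine Real.exp_le_exp.2 ?_
    calc s * V i ω ≤ |s * V i ω| := le_abs_self _
    _ = |s| * |V i ω| := abs_mul _ _
    _ ≤ |s| * C := by
        refine mul_le_mul_of_nonneg_left (hC i ω) (abs_nonneg s)
  have hint_sum : Integrable (fun ω => Real.exp (s * (∑ i, V i) ω)) μ :=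
    hind.integrable_exp_mul_sum hVmeas (fun i _ => hint i)
  have key := measure_ge_le_exp_mul_mgf (X := ∑ i, V i) (μ := μ) (t := s) ε hs hint_sum
  have hset : {ω | ε ≤ (∑ i, V i) ω} = {ω | ε ≤ ∑ i, V i ω} := by
    ext ω; simp [Finset.sum_apply]
  rw [hset] at key
  refine key.trans ?_
  rw [hind.mgf_sum hVmeas]
  have hMnn : ∀ i : Fin n, (0:ℝ) ≤ mgf (V i) μ s := fun i => mgf_nonneg
  refine mul_le_mul_of_nonneg_left ?_ (Real.exp_pos _).le
  calc ∏ i : Fin n, mgf (V i) μ s ≤ ∏ _i : Fin n, M :=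
        Finset.prod_le_prod (fun i _ => hMnn i) (fun i _ => hM i)
  _ = M ^ n := by rw [Finset.prod_const, Finset.card_univ, Fintype.card_fin]

open Classical in
lemma integral_exp_ite {α : Type*} [MeasurableSpace α] (ν : Measure α) [IsProbabilityMeasure ν]
    {A B : Set α} (hA : MeasurableSet A) (hB : MeasurableSet B) (hBA : B ⊆ A) (c d : ℝ) :
    ∫ x, Real.exp (if x ∈ B then c else if x ∈ A then d else 0) ∂ν
      = 1 + (ν A).toReal * (Real.exp d - 1) + (ν B).toReal * (Real.exp c - Real.exp d) := by
  have hfun : (fun x => Real.exp (if x ∈ B then c else if x ∈ A then d else 0))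
      = fun x => 1 + A.indicator (fun _ => Real.exp d - 1) x
          + B.indicator (fun _ => Real.exp c - Real.exp d) x := by
    funext x
    by_cases hxB : x ∈ B
    · have hxA : x ∈ A := hBA hxB
      simp [hxB, hxA, Set.indicator_of_mem]
    · by_cases hxA : x ∈ A
      · simp [hxB, hxA]
      · simp [hxB, hxA]
  rw [hfun]
  have hiA : Integrable (A.indicator (fun _ => Real.exp d - 1)) ν :=
    (integrable_const _).indicator hA
  have hiB : Integrable (B.indicator (fun _ => Real.exp c - Real.exp d)) ν :=
    (integrable_const _).indicator hB
  have h1 := integral_add ((integrable_const (1:ℝ)).add hiA) hiB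
  have h2 := integral_add (integrable_const (1:ℝ)) hiA
  simp only [Pi.add_apply] at h1 h2
  rw [h1, h2] at *
  rw [integral_indicator_const _ hA, integral_indicator_const _ hB]
  simp [mul_comm]
  rfl

open Classical in
lemma chernoff_group {𝒳 : Type*} [MeasurableSpace 𝒳] {Ω : Type*} [MeasurableSpace Ω]
    (μ : Measure Ω) [IsProbabilityMeasure μ] (ν : Measure 𝒳) [IsProbabilityMeasure ν]
    {n : ℕ} (samples : Fin n → Ω → 𝒳) (hmeas : ∀ i, Measurable (samples i))
    (hindep : iIndepFun samples μ)
    (hdist : ∀ i, μ.map (samples i) = ν)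
    {A B : Set 𝒳} (hA : MeasurableSet A) (hB : MeasurableSet B) (hBA : B ⊆ A)
    (b a ε : ℝ) {s : ℝ} (hs : 0 ≤ s) :
    (μ {ω | ε ≤ ∑ i, if samples i ω ∈ B then b else if samples i ω ∈ A then a else 0}).toReal
      ≤ Real.exp (-s * ε) * (1 + (ν A).toReal * (Real.exp (s * a) - 1)
          + (ν B).toReal * (Real.exp (s * b) - Real.exp (s * a))) ^ n := by
  set g : 𝒳 → ℝ := fun x => if x ∈ B then b else if x ∈ A then a else 0 with hg_def
  have hg : Measurable g :=
    Measurable.ite hB measurable_const (Measurable.ite hA measurable_const measurable_const)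
  have hVmeas : ∀ i, Measurable (fun ω => g (samples i ω)) := fun i => hg.comp (hmeas i)
  have hind2 : iIndepFun (fun i => g ∘ samples i) μ :=
    hindep.comp (fun _ => g) (fun _ => hg)
  have hmgf : ∀ i, mgf (fun ω => g (samples i ω)) μ s
      = 1 + (ν A).toReal * (Real.exp (s * a) - 1)
          + (ν B).toReal * (Real.exp (s * b) - Real.exp (s * a)) := by
    intro i
    have h1 : mgf (fun ω => g (samples i ω)) μ s
        = ∫ x, Real.exp (s * g x) ∂(μ.map (samples i)) := by
      rw [integral_map (hmeas i).aemeasurable ((hg.const_mul s).exp.aestronglyMeasurable)]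
      rfl
    rw [h1, hdist i, ← integral_exp_ite ν hA hB hBA (s * b) (s * a)]
    congr 1
    funext x
    by_cases hxB : x ∈ B
    · simp [hg_def, hxB]
    · by_cases hxA : x ∈ A
      · simp [hg_def, hxB, hxA]
      · simp [hg_def, hxB, hxA]
  have := chernoff_ge μ (fun i => fun ω => g (samples i ω)) hVmeas hind2
    (|b| + |a|) (fun i ω => ?_) hs _ (fun i => le_of_eq (hmgf i)) ε
  · exact this
  · have : |g (samples i ω)| ≤ |b| + |a| := by
      by_cases hxB : samples i ω ∈ B
      · simp only [hg_def, hxB, if_true]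
        nlinarith [abs_nonneg a, le_refl |b|]
      · by_cases hxA : samples i ω ∈ A
        · simp only [hg_def, hxB, hxA, if_false, if_true]
          nlinarith [abs_nonneg b]
        · simp only [hg_def, hxB, hxA, if_false, abs_zero]
          positivity
    exact this

set_option maxHeartbeats 2000000 in
open Classical in
lemma group_bad {𝒳 : Type*} [MeasurableSpace 𝒳] {Ω : Type*} [MeasurableSpace Ω]
    (μ : Measure Ω) [IsProbabilityMeasure μ] (ν : Measure 𝒳) [IsProbabilityMeasure ν]
    {n : ℕ} (samples : Fin n → Ω → 𝒳) (hmeas : ∀ i, Measurable (samples i))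
    (hindep : iIndepFun samples μ)
    (hdist : ∀ i, μ.map (samples i) = ν)
    {A B : Set 𝒳} (hA : MeasurableSet A) (hB : MeasurableSet B) (hBA : B ⊆ A)
    (δ : ℝ) (hδ0 : 0 < δ) (hδ1 : δ < 1/2)
    (hq : 8 * Real.log (8/δ) < (n:ℝ) * (ν A).toReal) :
    (μ {ω | ¬((1:ℝ)/2 < (∑ i, if samples i ω ∈ A then (1:ℝ) else 0) ∧
        |(∑ i, if samples i ω ∈ B then (1:ℝ) else 0) /
          (∑ i, if samples i ω ∈ A then (1:ℝ) else 0) - (ν B).toReal / (ν A).toReal| ≤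
          Real.sqrt (Real.log (16/δ) / ((n:ℝ) * (ν A).toReal)))}).toReal ≤ 3 * (δ/16) := by
  set q : ℝ := (ν A).toReal with hq_def
  set w : ℝ := (ν B).toReal with hw_def
  set L : ℝ := Real.log (16/δ) with hL_def
  set γ : ℝ := w / q with hγ_def
  set t : ℝ := Real.sqrt (L / ((n:ℝ) * q)) with ht_def
  -- basic facts
  have h16 : (32:ℝ) ≤ 16/δ := by
    rw [le_div_iff₀ hδ0]; linarith
  have hL1 : 1 < L := by
    rw [hL_def, lt_log_iff_exp_lt (by linarith : (0:ℝ) < 16/δ)]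
    have := Real.exp_one_lt_d9
    linarith
  have hlog2L : 5 * Real.log 2 ≤ L := by
    have h32 : Real.log 32 ≤ L := Real.log_le_log (by norm_num) h16
    have : Real.log 32 = 5 * Real.log 2 := by
      rw [show (32:ℝ) = 2^5 by norm_num, Real.log_pow]; push_cast; ring
    linarith
  have hlog8 : Real.log (8/δ) = L - Real.log 2 := by
    rw [hL_def, show (16:ℝ)/δ = 2 * (8/δ) by ring,
      Real.log_mul (by norm_num) (by positivity)]
    ring
  have hlog2pos : (0:ℝ) < Real.log 2 := Real.log_pos (by norm_num)
  have hnq : 32/5 * L < (n:ℝ) * q := by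
    rw [hlog8] at hq; nlinarith
  have hL0 : (0:ℝ) < L := by linarith
  have hnq0 : (0:ℝ) < (n:ℝ) * q := by nlinarith
  have hq0 : (0:ℝ) < q := by
    rcases (mul_pos_iff.1 hnq0) with ⟨_, h⟩ | ⟨h, _⟩
    · exact h
    · exact absurd h (not_lt.2 (Nat.cast_nonneg n))
  have hq1 : q ≤ 1 := by
    rw [hq_def]
    exact ENNReal.toReal_le_of_le_ofReal one_pos.le (by simpa using prob_le_one (μ := ν) (s := A))
  have hwq : w ≤ q := by
    rw [hw_def, hq_def]
    exact ENNReal.toReal_mono (measure_ne_top ν A) (measure_mono hBA)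
  have hw0 : 0 ≤ w := ENNReal.toReal_nonneg
  have hγ0 : 0 ≤ γ := by positivity
  have hγ1 : γ ≤ 1 := by rw [hγ_def, div_le_one hq0]; exact hwq
  have ht0 : 0 ≤ t := Real.sqrt_nonneg _
  have ht2 : t^2 = L / ((n:ℝ) * q) := Real.sq_sqrt (by positivity)
  have ht2' : t^2 ≤ 5/32 := by
    rw [ht2, div_le_iff₀ hnq0]; nlinarith
  have hnqt2 : (n:ℝ) * q * t^2 = L := by
    rw [ht2]; exact mul_div_cancel₀ L hnq0.ne'
  have hn0 : (0:ℝ) < (n:ℝ) := by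
    rcases (mul_pos_iff.1 hnq0) with ⟨h, _⟩ | ⟨_, h⟩
    · exact h
    · linarith
  have hwγq : w = γ * q := by rw [hγ_def]; field_simp
  -- the three Chernoff events
  set E1 : Set Ω := {ω | (0:ℝ) ≤ ∑ i, if samples i ω ∈ B then (1 - γ - t)
      else if samples i ω ∈ A then (-(γ + t)) else 0} with hE1_def
  set E2 : Set Ω := {ω | (0:ℝ) ≤ ∑ i, if samples i ω ∈ B then (γ - t - 1)
      else if samples i ω ∈ A then (γ - t) else 0} with hE2_def
  set E3 : Set Ω := {ω | (-(1:ℝ)/2) ≤ ∑ i, if samples i ω ∈ B then (-1:ℝ)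
      else if samples i ω ∈ A then (-1:ℝ) else 0} with hE3_def
  have hsum : ∀ (b a : ℝ) (ω : Ω),
      (∑ i, if samples i ω ∈ B then b else if samples i ω ∈ A then a else 0)
        = (b - a) * (∑ i, if samples i ω ∈ B then (1:ℝ) else 0)
          + a * (∑ i, if samples i ω ∈ A then (1:ℝ) else 0) := by
    intro b a ω
    rw [Finset.mul_sum, Finset.mul_sum, ← Finset.sum_add_distrib]
    refine Finset.sum_congr rfl fun i _ => ?_
    by_cases hxB : samples i ω ∈ B
    · simp [hxB, hBA hxB]
    · by_cases hxA : samples i ω ∈ A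
      · simp [hxB, hxA]
      · simp [hxB, hxA]
  have hsub : {ω | ¬((1:ℝ)/2 < (∑ i, if samples i ω ∈ A then (1:ℝ) else 0) ∧
        |(∑ i, if samples i ω ∈ B then (1:ℝ) else 0) /
          (∑ i, if samples i ω ∈ A then (1:ℝ) else 0) - γ| ≤ t)} ⊆ E1 ∪ E2 ∪ E3 := by
    intro ω hω
    simp only [Set.mem_setOf_eq] at hω
    set Nω : ℝ := ∑ i, if samples i ω ∈ A then (1:ℝ) else 0 with hNω_def
    set Wω : ℝ := ∑ i, if samples i ω ∈ B then (1:ℝ) else 0 with hWω_def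
    rw [not_and_or] at hω
    rcases hω with hω | hω
    · -- N ≤ 1/2 : E3
      refine Set.mem_union_right _ ?_
      simp only [hE3_def, Set.mem_setOf_eq]
      rw [hsum]
      push_neg at hω
      rw [← hNω_def, ← hWω_def]
      linarith
    · push_neg at hω
      by_cases hN : (1:ℝ)/2 < Nω
      swap
      · refine Set.mem_union_right _ ?_
        simp only [hE3_def, Set.mem_setOf_eq]
        rw [hsum, ← hNω_def, ← hWω_def]
        push_neg at hN
        linarith
      have hN0 : (0:ℝ) < Nω := by linarith
      have habs : t < |Wω / Nω - γ| := hω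
      rcases lt_abs.1 habs with hgt | hgt
      · -- upper deviation : E1
        refine Set.mem_union_left _ (Set.mem_union_left _ ?_)
        simp only [hE1_def, Set.mem_setOf_eq]
        rw [hsum, ← hNω_def, ← hWω_def]
        have : (γ + t) * Nω < Wω := by
          have h2 : γ + t < Wω / Nω := by linarith
          rw [lt_div_iff₀ hN0] at h2
          linarith
        nlinarith
      · -- lower deviation : E2
        refine Set.mem_union_left _ (Set.mem_union_right _ ?_)
        simp only [hE2_def, Set.mem_setOf_eq]
        rw [hsum, ← hNω_def, ← hWω_def]
        have : Wω < (γ - t) * Nω := by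
          rw [lt_neg] at hgt
          have : Wω / Nω < γ - t := by linarith
          rw [div_lt_iff₀ hN0] at this
          linarith
        nlinarith
  refine le_trans (ENNReal.toReal_mono (measure_ne_top μ _) (measure_mono hsub)) ?_
  have hU : (μ (E1 ∪ E2 ∪ E3)).toReal ≤ (μ E1).toReal + (μ E2).toReal + (μ E3).toReal := by
    have h1 : μ (E1 ∪ E2 ∪ E3) ≤ μ E1 + μ E2 + μ E3 := by
      refine le_trans (measure_union_le _ _) ?_
      gcongr
      exact measure_union_le _ _
    refine le_trans (ENNReal.toReal_mono ?_ h1) ?_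
    · exact ENNReal.add_ne_top.2 ⟨ENNReal.add_ne_top.2 ⟨measure_ne_top _ _, measure_ne_top _ _⟩,
        measure_ne_top _ _⟩
    · rw [ENNReal.toReal_add (ENNReal.add_ne_top.2 ⟨measure_ne_top _ _, measure_ne_top _ _⟩)
        (measure_ne_top _ _), ENNReal.toReal_add (measure_ne_top _ _) (measure_ne_top _ _)]
  refine le_trans hU ?_
  -- common arithmetic facts
  have hexpL : Real.exp (-L) = δ/16 := by
    rw [Real.exp_neg, hL_def, Real.exp_log (by positivity : (0:ℝ) < 16/δ), inv_div]
  -- the tail bound for E1 and E2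
  have htail : ∀ X : ℝ, X ≤ Real.exp (-(2*t^2)) →
      1 + q * (X - 1) ≤ Real.exp (-(q * t^2)) := by
    intro X hX
    have h1 : 1 + 2*t^2 ≤ Real.exp (2*t^2) := by linarith [Real.add_one_le_exp (2*t^2)]
    have hpos : (0:ℝ) < 1 + 2*t^2 := by positivity
    have h2 : Real.exp (-(2*t^2)) ≤ 1/(1+2*t^2) := by
      rw [Real.exp_neg]
      rw [one_div]
      exact inv_anti₀ hpos h1
    have h3 : Real.exp (-(2*t^2)) ≤ 1 - t^2 := by
      refine le_trans h2 ?_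
      rw [div_le_iff₀ hpos]
      nlinarith [sq_nonneg t, ht2']
    have h4 : 1 - q*t^2 ≤ Real.exp (-(q*t^2)) := by linarith [Real.add_one_le_exp (-(q*t^2))]
    nlinarith [hq0]
  have hpowL : ∀ X : ℝ, 0 ≤ X → X ≤ Real.exp (-(q * t^2)) → X ^ n ≤ δ / 16 := by
    intro X hX0 hX
    calc X ^ n ≤ Real.exp (-(q * t^2)) ^ n := pow_le_pow_left₀ hX0 hX n
    _ = Real.exp ((n:ℝ) * (-(q * t^2))) := by rw [Real.exp_nat_mul]
    _ = Real.exp (-L) := by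
        congr 1
        rw [← hnqt2]; ring
    _ = δ/16 := hexpL
  have hvpos_gen : ∀ u : ℝ, (0:ℝ) < 1 - γ + γ * Real.exp u := by
    intro u
    rcases eq_or_lt_of_le hγ0 with hh | hh
    · rw [← hh]; norm_num
    · nlinarith [mul_pos hh (Real.exp_pos u)]
  have hB1 : (μ E1).toReal ≤ δ/16 := by
    rw [hE1_def]
    refine le_trans (chernoff_group μ ν samples hmeas hindep hdist hA hB hBA
      (1 - γ - t) (-(γ + t)) 0 (s := 4*t) (by positivity)) ?_
    rw [← hq_def, ← hw_def]
    have hzero : -(4*t) * 0 = 0 := by ring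
    rw [hzero, Real.exp_zero, one_mul]
    -- bound the base
    have hEexp : Real.exp ((4*t) * (1 - γ - t))
        = Real.exp (4*t) * Real.exp ((4*t) * (-(γ+t))) := by
      rw [← Real.exp_add]; congr 1; ring
    have hvpos : (0:ℝ) < 1 - γ + γ * Real.exp (4*t) := hvpos_gen _
    have hXle : 1 - γ + γ * Real.exp (4*t) ≤ Real.exp (γ * (4*t) + (4*t)^2/8) := by
      have := Real.exp_le_exp.2 (hoeff_bern hγ0 hγ1 (4*t))
      rwa [Real.exp_log hvpos] at this
    have e1 : Real.exp ((4*t) * (-(γ+t))) * (1 - γ + γ * Real.exp (4*t))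
        ≤ Real.exp (-(2*t^2)) := by
      calc Real.exp ((4*t) * (-(γ+t))) * (1 - γ + γ * Real.exp (4*t))
          ≤ Real.exp ((4*t) * (-(γ+t))) * Real.exp (γ * (4*t) + (4*t)^2/8) :=
            mul_le_mul_of_nonneg_left hXle (Real.exp_pos _).le
      _ = Real.exp ((4*t) * (-(γ+t)) + (γ * (4*t) + (4*t)^2/8)) := (Real.exp_add _ _).symm
      _ = Real.exp (-(2*t^2)) := by congr 1; ring
    have hbase_le : 1 + q * (Real.exp ((4*t) * (-(γ+t))) - 1)
        + w * (Real.exp ((4*t) * (1 - γ - t)) - Real.exp ((4*t) * (-(γ+t))))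
        ≤ Real.exp (-(q * t^2)) := by
      refine le_trans ?_ (htail (Real.exp ((4*t) * (-(γ+t))) * (1 - γ + γ * Real.exp (4*t))) e1)
      rw [hwγq, hEexp]
      nlinarith [Real.exp_pos ((4*t) * (-(γ+t))), hq0]
    have hbase_nn : 0 ≤ 1 + q * (Real.exp ((4*t) * (-(γ+t))) - 1)
        + w * (Real.exp ((4*t) * (1 - γ - t)) - Real.exp ((4*t) * (-(γ+t)))) := by
      nlinarith [Real.exp_pos ((4*t) * (-(γ+t))), Real.exp_pos ((4*t) * (1 - γ - t)),
        mul_nonneg (sub_nonneg.2 hwq) (Real.exp_pos ((4*t) * (-(γ+t)))).le,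
        mul_nonneg hw0 (Real.exp_pos ((4*t) * (1 - γ - t))).le]
    exact hpowL _ hbase_nn hbase_le
  have hB2 : (μ E2).toReal ≤ δ/16 := by
    rw [hE2_def]
    refine le_trans (chernoff_group μ ν samples hmeas hindep hdist hA hB hBA
      (γ - t - 1) (γ - t) 0 (s := 4*t) (by positivity)) ?_
    rw [← hq_def, ← hw_def]
    have hzero : -(4*t) * 0 = 0 := by ring
    rw [hzero, Real.exp_zero, one_mul]
    have hEexp : Real.exp ((4*t) * (γ - t - 1))
        = Real.exp (-(4*t)) * Real.exp ((4*t) * (γ - t)) := by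
      rw [← Real.exp_add]; congr 1; ring
    have hvpos : (0:ℝ) < 1 - γ + γ * Real.exp (-(4*t)) := hvpos_gen _
    have hXle : 1 - γ + γ * Real.exp (-(4*t)) ≤ Real.exp (γ * (-(4*t)) + (-(4*t))^2/8) := by
      have := Real.exp_le_exp.2 (hoeff_bern hγ0 hγ1 (-(4*t)))
      rwa [Real.exp_log hvpos] at this
    have e1 : Real.exp ((4*t) * (γ - t)) * (1 - γ + γ * Real.exp (-(4*t)))
        ≤ Real.exp (-(2*t^2)) := by
      calc Real.exp ((4*t) * (γ - t)) * (1 - γ + γ * Real.exp (-(4*t)))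
          ≤ Real.exp ((4*t) * (γ - t)) * Real.exp (γ * (-(4*t)) + (-(4*t))^2/8) :=
            mul_le_mul_of_nonneg_left hXle (Real.exp_pos _).le
      _ = Real.exp ((4*t) * (γ - t) + (γ * (-(4*t)) + (-(4*t))^2/8)) := (Real.exp_add _ _).symm
      _ = Real.exp (-(2*t^2)) := by congr 1; ring
    have hbase_le : 1 + q * (Real.exp ((4*t) * (γ - t)) - 1)
        + w * (Real.exp ((4*t) * (γ - t - 1)) - Real.exp ((4*t) * (γ - t)))
        ≤ Real.exp (-(q * t^2)) := by
      refine le_trans ?_ (htail (Real.exp ((4*t) * (γ - t)) * (1 - γ + γ * Real.exp (-(4*t)))) e1)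
      rw [hwγq, hEexp]
      nlinarith [Real.exp_pos ((4*t) * (γ - t)), hq0]
    have hbase_nn : 0 ≤ 1 + q * (Real.exp ((4*t) * (γ - t)) - 1)
        + w * (Real.exp ((4*t) * (γ - t - 1)) - Real.exp ((4*t) * (γ - t))) := by
      nlinarith [Real.exp_pos ((4*t) * (γ - t)), Real.exp_pos ((4*t) * (γ - t - 1)),
        mul_nonneg (sub_nonneg.2 hwq) (Real.exp_pos ((4*t) * (γ - t))).le,
        mul_nonneg hw0 (Real.exp_pos ((4*t) * (γ - t - 1))).le]
    exact hpowL _ hbase_nn hbase_le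
  have hB3 : (μ E3).toReal ≤ δ/16 := by
    rw [hE3_def]
    refine le_trans (chernoff_group μ ν samples hmeas hindep hdist hA hB hBA
      (-1) (-1) (-(1:ℝ)/2) (s := 2*L) (by positivity)) ?_
    rw [← hq_def, ← hw_def]
    have hsimp : Real.exp ((2*L) * (-1:ℝ)) - Real.exp ((2*L) * (-1:ℝ)) = 0 := by ring
    rw [hsimp, mul_zero, add_zero]
    have h1 : 1 + 2*L ≤ Real.exp (2*L) := by linarith [Real.add_one_le_exp (2*L)]
    have hposL : (0:ℝ) < 1 + 2*L := by positivity
    have h2 : Real.exp ((2*L) * (-1:ℝ)) ≤ 1/(1+2*L) := by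
      rw [show (2*L) * (-1:ℝ) = -(2*L) by ring, Real.exp_neg, one_div]
      exact inv_anti₀ hposL h1
    have hnq1 : 1 + 2*L ≤ (n:ℝ) * q := by nlinarith
    have h2' : Real.exp ((2*L) * (-1:ℝ)) * (1+2*L) ≤ 1 := (le_div_iff₀ hposL).1 h2
    have he1 : Real.exp ((2*L) * (-1:ℝ)) ≤ 1 := h2.trans (by rw [div_le_one hposL]; linarith)
    have hbase_le : 1 + q * (Real.exp ((2*L) * (-1:ℝ)) - 1) ≤ Real.exp (-(2*L/(n:ℝ))) := by
      have h6 : 2*L ≤ (1 - Real.exp ((2*L) * (-1:ℝ))) * (1+2*L) := by nlinarith [h2']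
      have hkey : 2*L ≤ (n:ℝ) * q * (1 - Real.exp ((2*L) * (-1:ℝ))) := by
        nlinarith [mul_nonneg (sub_nonneg.2 hnq1) (sub_nonneg.2 he1), h6]
      have h3 : 2*L/(n:ℝ) ≤ q * (1 - Real.exp ((2*L) * (-1:ℝ))) := by
        rw [div_le_iff₀ hn0]
        nlinarith [hkey]
      have h5 : 1 - 2*L/(n:ℝ) ≤ Real.exp (-(2*L/(n:ℝ))) := by
        linarith [Real.add_one_le_exp (-(2*L/(n:ℝ)))]
      linarith
    have hbase_nn : 0 ≤ 1 + q * (Real.exp ((2*L) * (-1:ℝ)) - 1) := by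
      nlinarith [Real.exp_pos ((2*L) * (-1:ℝ))]
    have hpow3 : (1 + q * (Real.exp ((2*L) * (-1:ℝ)) - 1)) ^ n ≤ Real.exp (-(2*L)) := by
      calc (1 + q * (Real.exp ((2*L) * (-1:ℝ)) - 1)) ^ n
          ≤ Real.exp (-(2*L/(n:ℝ))) ^ n := pow_le_pow_left₀ hbase_nn hbase_le n
      _ = Real.exp ((n:ℝ) * (-(2*L/(n:ℝ)))) := by rw [Real.exp_nat_mul]
      _ = Real.exp (-(2*L)) := by
          congr 1
          field_simp
    calc Real.exp (-(2*L) * (-(1:ℝ)/2)) * (1 + q * (Real.exp ((2*L) * (-1:ℝ)) - 1)) ^ n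
        ≤ Real.exp (-(2*L) * (-(1:ℝ)/2)) * Real.exp (-(2*L)) :=
          mul_le_mul_of_nonneg_left hpow3 (Real.exp_pos _).le
    _ = Real.exp (-(2*L) * (-(1:ℝ)/2) + -(2*L)) := (Real.exp_add _ _).symm
    _ = Real.exp (-L) := by congr 1; ring
    _ = δ/16 := hexpL
  linarith

end Aux

open ProbabilityTheory in
set_option maxHeartbeats 2000000 in
/-- Concentration of the empirical discrimination: for `n` i.i.d. samples from `ν`, if
`n p_{ya} > 8 log(8/δ)` for all `(y,a)` and `δ ∈ (0, 1/2)`, then with probability at least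
`1 - δ`, `|Γ(h) - Γ^S(h)| ≤ 2 max_{ya} √(log(16/δ) / (n p_{ya}))`. -/
theorem stmt5 {Ω : Type*} [MeasurableSpace Ω] (μ : Measure Ω) [IsProbabilityMeasure μ]
    (ν : Measure (𝒳 × Bool × Bool)) [IsProbabilityMeasure ν]
    (n : ℕ) (samples : Fin n → Ω → 𝒳 × Bool × Bool)
    (hmeas : ∀ i, Measurable (samples i))
    (hindep : ProbabilityTheory.iIndepFun samples μ)
    (hdist : ∀ i, μ.map (samples i) = ν)
    (h : 𝒳 → Bool → Bool) (hh : Measurable fun p : 𝒳 × Bool => h p.1 p.2)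
    (δ : ℝ) (hδ0 : 0 < δ) (hδ1 : δ < 1 / 2)
    (hn : ∀ y a, (n : ℝ) * pYA ν y a > 8 * Real.log (8 / δ)) :
    (1 - δ : ℝ) ≤
      (μ {ω | |GammaPop ν h - GammaEmp (fun i => samples i ω) h| ≤
        2 * max
          (max (Real.sqrt (Real.log (16 / δ) / (n * pYA ν false false)))
               (Real.sqrt (Real.log (16 / δ) / (n * pYA ν false true))))
          (max (Real.sqrt (Real.log (16 / δ) / (n * pYA ν true false)))
               (Real.sqrt (Real.log (16 / δ) / (n * pYA ν true true))))}).toReal := by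
  classical
  set As : Bool → Bool → Set (𝒳 × Bool × Bool) :=
    fun y a => {p | p.2.2 = y ∧ p.2.1 = a} with hAs_def
  set Bs : Bool → Bool → Set (𝒳 × Bool × Bool) :=
    fun y a => {p | h p.1 p.2.1 = true ∧ p.2.2 = y ∧ p.2.1 = a} with hBs_def
  have hAmeas : ∀ y a, MeasurableSet (As y a) := by
    intro y a
    rw [hAs_def]
    exact ((measurable_snd.comp measurable_snd) (measurableSet_singleton y)).inter
      ((measurable_fst.comp measurable_snd) (measurableSet_singleton a))
  have hhm : Measurable (fun p : 𝒳 × Bool × Bool => h p.1 p.2.1) :=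
    hh.comp (measurable_fst.prodMk (measurable_fst.comp measurable_snd))
  have hBmeas : ∀ y a, MeasurableSet (Bs y a) := by
    intro y a
    rw [hBs_def]
    exact (hhm (measurableSet_singleton true)).inter (hAmeas y a)
  have hBA : ∀ y a, Bs y a ⊆ As y a := fun y a p hp => hp.2
  have hn' : ∀ y a, 8 * Real.log (8 / δ) < (n:ℝ) * (ν (As y a)).toReal := by
    intro y a
    rw [hAs_def]
    exact hn y a
  clear_value As Bs
  set Bad : Bool → Bool → Set Ω := fun y a =>
    {ω | ¬((1:ℝ)/2 < (∑ i, if samples i ω ∈ As y a then (1:ℝ) else 0) ∧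
        |(∑ i, if samples i ω ∈ Bs y a then (1:ℝ) else 0) /
          (∑ i, if samples i ω ∈ As y a then (1:ℝ) else 0)
          - (ν (Bs y a)).toReal / (ν (As y a)).toReal| ≤
          Real.sqrt (Real.log (16/δ) / ((n:ℝ) * (ν (As y a)).toReal)))} with hBad_def
  have hbad : ∀ y a, (μ (Bad y a)).toReal ≤ 3 * (δ/16) := by
    intro y a
    rw [hBad_def]
    beta_reduce
    exact group_bad μ ν samples hmeas hindep hdist (hAmeas y a) (hBmeas y a) (hBA y a)
      δ hδ0 hδ1 (hn' y a)
  have hBadMeas : ∀ y a, MeasurableSet (Bad y a) := by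
    intro y a
    rw [hBad_def]
    have hNmeas : Measurable (fun ω => ∑ i, if samples i ω ∈ As y a then (1:ℝ) else 0) := by
      apply Finset.measurable_sum
      intro i _
      exact Measurable.ite (hmeas i (hAmeas y a)) measurable_const measurable_const
    have hWmeas : Measurable (fun ω => ∑ i, if samples i ω ∈ Bs y a then (1:ℝ) else 0) := by
      apply Finset.measurable_sum
      intro i _
      exact Measurable.ite (hmeas i (hBmeas y a)) measurable_const measurable_const
    exact ((measurableSet_lt measurable_const hNmeas).inter
      (measurableSet_le (((hWmeas.div hNmeas).sub measurable_const).abs)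
        measurable_const)).compl
  have hgood : ∀ (y a : Bool) (ω : Ω), ω ∉ Bad y a →
      |gammaPop ν h y a - gammaEmp (fun i => samples i ω) h y a| ≤
        Real.sqrt (Real.log (16/δ) / ((n:ℝ) * pYA ν y a)) := by
    intro y a ω hω
    rw [hBad_def] at hω
    simp only [Set.mem_setOf_eq, not_not] at hω
    obtain ⟨hN, habs⟩ := hω
    have hPop : gammaPop ν h y a = (ν (Bs y a)).toReal / (ν (As y a)).toReal := by
      simp only [gammaPop, pYA, hAs_def, hBs_def]
    have hEmp : gammaEmp (fun i => samples i ω) h y a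
        = (∑ i, if samples i ω ∈ Bs y a then (1:ℝ) else 0)
          / (∑ i, if samples i ω ∈ As y a then (1:ℝ) else 0) := by
      simp only [gammaEmp]
      congr 1
      · refine Finset.sum_congr rfl fun i _ => ?_
        by_cases hc : h (samples i ω).1 (samples i ω).2.1 = true ∧
            (samples i ω).2.2 = y ∧ (samples i ω).2.1 = a
        · simp [hc, hBs_def, Set.mem_setOf_eq]
        · simp [hc, hBs_def, Set.mem_setOf_eq]
      · refine Finset.sum_congr rfl fun i _ => ?_
        by_cases hc : (samples i ω).2.2 = y ∧ (samples i ω).2.1 = a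
        · simp [hc, hAs_def, Set.mem_setOf_eq]
        · simp [hc, hAs_def, Set.mem_setOf_eq]
    have hqeq : pYA ν y a = (ν (As y a)).toReal := by
      simp only [pYA, hAs_def]
    rw [hPop, hEmp, abs_sub_comm, hqeq]
    exact habs
  have habs_sub : ∀ x y : ℝ, |x - y| ≤ |x| + |y| := by
    intro x y
    calc |x - y| = |x + -y| := by rw [sub_eq_add_neg]
    _ ≤ |x| + |-y| := abs_add_le _ _
    _ = |x| + |y| := by rw [abs_neg]
  have hdet : ∀ ω : Ω, ω ∉ Bad false false → ω ∉ Bad false true →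
      ω ∉ Bad true false → ω ∉ Bad true true →
      |GammaPop ν h - GammaEmp (fun i => samples i ω) h| ≤
        2 * max
          (max (Real.sqrt (Real.log (16 / δ) / (n * pYA ν false false)))
               (Real.sqrt (Real.log (16 / δ) / (n * pYA ν false true))))
          (max (Real.sqrt (Real.log (16 / δ) / (n * pYA ν true false)))
               (Real.sqrt (Real.log (16 / δ) / (n * pYA ν true true)))) := by
    intro ω h00 h01 h10 h11
    set T := max
          (max (Real.sqrt (Real.log (16 / δ) / (n * pYA ν false false)))
               (Real.sqrt (Real.log (16 / δ) / (n * pYA ν false true))))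
          (max (Real.sqrt (Real.log (16 / δ) / (n * pYA ν true false)))
               (Real.sqrt (Real.log (16 / δ) / (n * pYA ν true true)))) with hT_def
    have t00 : Real.sqrt (Real.log (16 / δ) / (n * pYA ν false false)) ≤ T := by
      rw [hT_def]; exact le_trans (le_max_left _ _) (le_max_left _ _)
    have t01 : Real.sqrt (Real.log (16 / δ) / (n * pYA ν false true)) ≤ T := by
      rw [hT_def]; exact le_trans (le_max_right _ _) (le_max_left _ _)
    have t10 : Real.sqrt (Real.log (16 / δ) / (n * pYA ν true false)) ≤ T := by
      rw [hT_def]; exact le_trans (le_max_left _ _) (le_max_right _ _)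
    have t11 : Real.sqrt (Real.log (16 / δ) / (n * pYA ν true true)) ≤ T := by
      rw [hT_def]; exact le_trans (le_max_right _ _) (le_max_right _ _)
    have k00 := le_trans (hgood false false ω h00) t00
    have k01 := le_trans (hgood false true ω h01) t01
    have k10 := le_trans (hgood true false ω h10) t10
    have k11 := le_trans (hgood true true ω h11) t11
    simp only [GammaPop, GammaEmp]
    refine le_trans (abs_max_sub_max_le_max _ _ _ _) (max_le ?_ ?_)
    · refine le_trans (abs_abs_sub_abs_le_abs_sub _ _) ?_
      have heq : gammaPop ν h false false - gammaPop ν h false true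
          - (gammaEmp (fun i => samples i ω) h false false
            - gammaEmp (fun i => samples i ω) h false true)
          = (gammaPop ν h false false - gammaEmp (fun i => samples i ω) h false false)
            - (gammaPop ν h false true - gammaEmp (fun i => samples i ω) h false true) := by
        ring
      rw [heq]
      refine le_trans (habs_sub _ _) ?_
      linarith
    · refine le_trans (abs_abs_sub_abs_le_abs_sub _ _) ?_
      have heq : gammaPop ν h true false - gammaPop ν h true true
          - (gammaEmp (fun i => samples i ω) h true false
            - gammaEmp (fun i => samples i ω) h true true)
          = (gammaPop ν h true false - gammaEmp (fun i => samples i ω) h true false)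
            - (gammaPop ν h true true - gammaEmp (fun i => samples i ω) h true true) := by
        ring
      rw [heq]
      refine le_trans (habs_sub _ _) ?_
      linarith
  set U : Set Ω := ((Bad false false ∪ Bad false true) ∪ Bad true false) ∪ Bad true true
    with hU_def
  have hUm : MeasurableSet U :=
    (((hBadMeas false false).union (hBadMeas false true)).union (hBadMeas true false)).union
      (hBadMeas true true)
  have hsub : Uᶜ ⊆ {ω | |GammaPop ν h - GammaEmp (fun i => samples i ω) h| ≤
        2 * max
          (max (Real.sqrt (Real.log (16 / δ) / (n * pYA ν false false)))
               (Real.sqrt (Real.log (16 / δ) / (n * pYA ν false true))))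
          (max (Real.sqrt (Real.log (16 / δ) / (n * pYA ν true false)))
               (Real.sqrt (Real.log (16 / δ) / (n * pYA ν true true))))} := by
    intro ω hω
    simp only [hU_def, Set.mem_compl_iff, Set.mem_union, not_or] at hω
    exact hdet ω hω.1.1.1 hω.1.1.2 hω.1.2 hω.2
  have hUle : (μ U).toReal ≤ δ := by
    have hle : μ U ≤ μ (Bad false false) + μ (Bad false true) + μ (Bad true false)
        + μ (Bad true true) := by
      refine le_trans (measure_union_le _ _) ?_
      gcongr
      refine le_trans (measure_union_le _ _) ?_
      gcongr
      exact measure_union_le _ _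
    have hne : ∀ (a b : ENNReal), a ≠ ⊤ → b ≠ ⊤ → a + b ≠ ⊤ :=
      fun a b ha hb => ENNReal.add_ne_top.2 ⟨ha, hb⟩
    have h12 := hne _ _ (measure_ne_top μ (Bad false false)) (measure_ne_top μ (Bad false true))
    have h123 := hne _ _ h12 (measure_ne_top μ (Bad true false))
    have h1234 := hne _ _ h123 (measure_ne_top μ (Bad true true))
    have := ENNReal.toReal_mono h1234 hle
    rw [ENNReal.toReal_add h123 (measure_ne_top μ (Bad true true)),
      ENNReal.toReal_add h12 (measure_ne_top μ (Bad true false)),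
      ENNReal.toReal_add (measure_ne_top μ (Bad false false))
        (measure_ne_top μ (Bad false true))] at this
    have b1 := hbad false false
    have b2 := hbad false true
    have b3 := hbad true false
    have b4 := hbad true true
    linarith
  calc (1 - δ : ℝ) ≤ 1 - (μ U).toReal := by linarith
  _ = (μ Uᶜ).toReal := by
      rw [measure_compl hUm (measure_ne_top _ _), measure_univ,
        ENNReal.toReal_sub_of_le prob_le_one ENNReal.one_ne_top, ENNReal.toReal_one]
  _ ≤ _ := ENNReal.toReal_mono (measure_ne_top _ _) (measure_mono hsub)
end

section
/- Let h_1,…,h_n be classifiers whose errors on m i.i.d. samples are mutually independent, with P(h_1 errs on any one sample)=α and P(h_i errs)=pα for i≥2, where p≤1/4 and α∈(0,1/2). If 2/m ≤ α ≤ (3 log(n/5))/(4pm), then P(h_1 makes at least one error on the sample AND some h_i, i≥2, makes zero errors) ≥ 1/2. -/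
/-! Both factors have the form `1 - (1 - x)^k` with `x k ≥ 2`, so each is at least
`1 - e⁻² ≥ 3/4` by `1 - x ≤ e^{-x}`, and `9/16 ≥ 1/2`. For the first factor `x k = α m ≥ 2`
is the lower bound on `α`. For the second, `x = (1 - pα)^m` is the probability that a fixed `h_i`
is errorless: since `pα ≤ 1/8`, `1 - pα ≥ e^{-4pα/3}`, and the upper bound on `α` turns this
into `(1 - pα)^m ≥ e^{-log (n/5)} = 5/n`, whence `(n - 1)(1 - pα)^m ≥ 2`. -/

open Real

lemma one_sub_pow_le_exp_neg_mul {x : ℝ} (hx : x ≤ 1) (m : ℕ) :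
    (1 - x) ^ m ≤ exp (-(x * m)) := by
  calc (1 - x) ^ m ≤ exp (-x) ^ m := pow_le_pow_left₀ (by linarith) (one_sub_le_exp_neg x) m
    _ = exp (-(x * m)) := by rw [← exp_nat_mul]; ring_nf

lemma exp_neg_two_le_quarter : exp (-2) ≤ 1 / 4 := by
  have h : (4 : ℝ) ≤ exp 2 := by nlinarith [quadratic_le_exp_of_nonneg (x := 2) zero_le_two]
  rw [exp_neg, one_div]
  exact inv_anti₀ (by norm_num) h

lemma three_quarters_le_one_sub_one_sub_pow {x : ℝ} {m : ℕ} (hx : x ≤ 1) (hxm : 2 ≤ x * m) :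
    3 / 4 ≤ 1 - (1 - x) ^ m := by
  have : (1 - x) ^ m ≤ exp (-2) :=
    (one_sub_pow_le_exp_neg_mul hx m).trans (exp_le_exp.mpr (by linarith))
  linarith [exp_neg_two_le_quarter]

lemma exp_neg_four_thirds_mul_le_one_sub {x : ℝ} (hx0 : 0 ≤ x) (hx : x ≤ 1 / 4) :
    exp (-(4 / 3 * x)) ≤ 1 - x := by
  -- `log (1 - x) ≥ -x / (1 - x) ≥ -4x/3`
  have hpos : 0 < 1 - x := by linarith
  rw [← exp_log hpos, exp_le_exp]
  have hlog := one_sub_inv_le_log_of_pos hpos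
  have : 1 - (1 - x)⁻¹ = -(x / (1 - x)) := by field_simp; ring
  have : x / (1 - x) ≤ 4 / 3 * x := by
    rw [div_le_iff₀ hpos]; nlinarith
  linarith

lemma exp_neg_four_thirds_mul_le_one_sub_pow {x : ℝ} (hx0 : 0 ≤ x) (hx : x ≤ 1 / 4) (m : ℕ) :
    exp (-(4 / 3 * x * m)) ≤ (1 - x) ^ m := by
  calc exp (-(4 / 3 * x * m)) = exp (-(4 / 3 * x)) ^ m := by rw [← exp_nat_mul]; ring_nf
    _ ≤ (1 - x) ^ m :=
      pow_le_pow_left₀ (exp_pos _).le (exp_neg_four_thirds_mul_le_one_sub hx0 hx) m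

/-- Classifiers `h_1, …, h_n` err independently on each of `m` i.i.d. samples, `h_1` with
probability `α`, each `h_i` (`i ≥ 2`) with probability `p·α`.  The probability that `h_1` makes
at least one error while some `h_i`, `i ≥ 2`, makes zero errors is
`(1 - (1-α)^m) * (1 - (1 - (1-pα)^m)^(n-1))`.  If `p ≤ 1/4`, `α ∈ (0,1/2)` and
`2/m ≤ α ≤ 3 log(n/5) / (4pm)`, this probability is at least `1/2`. -/
theorem stmt9 (m n : ℕ) (p α : ℝ)
    (hp0 : 0 < p) (hp : p ≤ 1 / 4)
    (hα0 : 0 < α) (hα1 : α < 1 / 2)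
    (hlow : 2 / (m : ℝ) ≤ α)
    (hhigh : α ≤ 3 * Real.log ((n : ℝ) / 5) / (4 * p * m)) :
    (1 / 2 : ℝ) ≤ (1 - (1 - α) ^ m) * (1 - (1 - (1 - p * α) ^ m) ^ (n - 1)) := by
  have hm : (0 : ℝ) < m := by
    rcases Nat.eq_zero_or_pos m with rfl | h
    · simp at hhigh; linarith -- `x / 0 = 0` turns `hhigh` into `α ≤ 0`
    · exact_mod_cast h
  have hpαm : 4 / 3 * (p * α) * m ≤ log (n / 5) := by
    rw [le_div_iff₀ (by positivity)] at hhigh; linarith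
  have hn : (5 : ℝ) < n := by
    by_contra! h
    have : log (n / 5) ≤ 0 := log_nonpos (by positivity) (by linarith)
    nlinarith [mul_pos (mul_pos hp0 hα0) hm]
  have hq : 5 / (n : ℝ) ≤ (1 - p * α) ^ m := by
    calc 5 / (n : ℝ) = exp (-log (n / 5)) := by rw [exp_neg, exp_log (by positivity), inv_div]
      _ ≤ exp (-(4 / 3 * (p * α) * m)) := exp_le_exp.mpr (by linarith)
      _ ≤ _ := exp_neg_four_thirds_mul_le_one_sub_pow (by positivity) (by nlinarith) m
  have hqn : 2 ≤ (1 - p * α) ^ m * ((n - 1 : ℕ) : ℝ) := by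
    have : 1 ≤ n := by exact_mod_cast (show (1 : ℝ) ≤ n by linarith)
    rw [Nat.cast_sub this, Nat.cast_one]
    calc (2 : ℝ) ≤ 5 / n * (n - 1) := by
          rw [div_mul_eq_mul_div, le_div_iff₀ (by linarith)]; linarith
      _ ≤ _ := mul_le_mul_of_nonneg_right hq (by linarith)
  have h₁ : 3 / 4 ≤ 1 - (1 - α) ^ m :=
    three_quarters_le_one_sub_one_sub_pow (by linarith) (by rw [div_le_iff₀ hm] at hlow; linarith)
  have h₂ : 3 / 4 ≤ 1 - (1 - (1 - p * α) ^ m) ^ (n - 1) :=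
    three_quarters_le_one_sub_one_sub_pow (pow_le_one₀ (by nlinarith) (by nlinarith)) hqn
  calc (1 / 2 : ℝ) ≤ 3 / 4 * (3 / 4) := by norm_num
    _ ≤ _ := mul_le_mul h₁ h₂ (by norm_num) (by linarith)
end

section
/- The second-moment non-discriminatory optimal linear predictor R* = w*ᵀZ with w* = Σ^{-1}(Cov(Z,Y) − αv) can be written as R* = R̂ − α(A − R̂·Cov(Y,A)/Var(Y)), where α = (Cov(Y,A) − Cov(R̂,Y)Cov(Y,A)/Var(Y)) / (Var(A) − 2Cov(Y,A)²/Var(Y) + Cov(R̂,Y)Cov(Y,A)²/Var(Y)²); i.e., R* is a function of R̂, A, and the joint second moments of (R̂,A,Y) only. -/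
open MeasureTheory Matrix

/-- Covariance of two centered real random variables. -/
noncomputable def cov {Ω : Type*} [MeasurableSpace Ω] (μ : Measure Ω) (f g : Ω → ℝ) : ℝ :=
  ∫ ω, f ω * g ω ∂μ

lemma cov_comm {Ω : Type*} [MeasurableSpace Ω] (μ : Measure Ω) (f g : Ω → ℝ) :
    cov μ f g = cov μ g f := by
  unfold cov; simp_rw [mul_comm]

lemma integrable_mul_of_memL2 {Ω : Type*} [MeasurableSpace Ω] {μ : Measure Ω} {f g : Ω → ℝ}
    (hf : MemLp f 2 μ) (hg : MemLp g 2 μ) : Integrable (fun ω => f ω * g ω) μ := by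
  have := L2.integrable_inner (𝕜 := ℝ) (hf.toLp f) (hg.toLp g)
  refine this.congr ?_
  filter_upwards [hf.coeFn_toLp, hg.coeFn_toLp] with ω h1 h2
  simp [h1, h2, real_inner_comm, RCLike.inner_apply, conj_trivial, mul_comm]

/-- The second-moment non-discriminatory optimal linear predictor
`R* = w*ᵀZ` with `w* = Σ⁻¹(Cov(Z,Y) - α v)` satisfies, pointwise,
`R* = R̂ - α'(A - R̂·Cov(Y,A)/Var(Y))` with
`α' = (Cov(Y,A) - Cov(R̂,Y)Cov(Y,A)/Var(Y)) /
      (Var(A) - 2Cov(Y,A)²/Var(Y) + Cov(R̂,Y)Cov(Y,A)²/Var(Y)²)`;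
so `R*` is a function of `R̂`, `A` and the joint second moments of `(R̂, A, Y)` only. -/
theorem stmt14 {Ω : Type*} [MeasurableSpace Ω] (μ : Measure Ω) [IsProbabilityMeasure μ]
    (d : ℕ) (Z : Fin (d + 1) → Ω → ℝ) (Y : Ω → ℝ)
    (hZ2 : ∀ i, MemLp (Z i) 2 μ) (hY2 : MemLp Y 2 μ)
    (hZc : ∀ i, ∫ ω, Z i ω ∂μ = 0) (hYc : ∫ ω, Y ω ∂μ = 0)
    (Sig : Matrix (Fin (d + 1)) (Fin (d + 1)) ℝ)
    (hSig : Sig = Matrix.of fun i j => cov μ (Z i) (Z j))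
    (hdet : IsUnit Sig.det)
    (hvarY : cov μ Y Y ≠ 0)
    (A : Ω → ℝ) (hA : A = Z (Fin.last d))
    (cZY cZA v wh : Fin (d + 1) → ℝ)
    (hcZY : cZY = fun i => cov μ (Z i) Y)
    (hcZA : cZA = fun i => cov μ (Z i) A)
    (hv : v = fun i => cZA i - cZY i * (cov μ Y A / cov μ Y Y))
    (hwh : wh = Sig⁻¹ *ᵥ cZY)
    (Rhat : Ω → ℝ) (hRhat : Rhat = fun ω => ∑ i, wh i * Z i ω)
    (hvv : v ⬝ᵥ (Sig⁻¹ *ᵥ v) ≠ 0)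
    (αc : ℝ) (hα : αc = (v ⬝ᵥ (Sig⁻¹ *ᵥ cZY)) / (v ⬝ᵥ (Sig⁻¹ *ᵥ v)))
    (w : Fin (d + 1) → ℝ) (hw : w = Sig⁻¹ *ᵥ (cZY - αc • v)) :
    ∀ ω, (∑ i, w i * Z i ω)
      = Rhat ω
        - ((cov μ Y A - cov μ Rhat Y * cov μ Y A / cov μ Y Y)
            / (cov μ A A - 2 * (cov μ Y A) ^ 2 / cov μ Y Y
                + cov μ Rhat Y * (cov μ Y A) ^ 2 / (cov μ Y Y) ^ 2))
          * (A ω - Rhat ω * (cov μ Y A / cov μ Y Y)) := by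
  classical
  set c : ℝ := cov μ Y A with hc
  set V : ℝ := cov μ Y Y with hV
  set r : ℝ := cov μ Rhat Y with hr
  set e : Fin (d + 1) → ℝ := Pi.single (Fin.last d) 1 with he
  -- symmetry of Sig
  have hSymm : Sigᵀ = Sig := by
    rw [hSig]; ext i j
    simp only [Matrix.transpose_apply, Matrix.of_apply]
    exact cov_comm μ (Z j) (Z i)
  have hT : (Sig⁻¹)ᵀ = Sig⁻¹ := by
    rw [Matrix.transpose_nonsing_inv, hSymm]
  have hdotsym : ∀ a b : Fin (d + 1) → ℝ,
      a ⬝ᵥ (Sig⁻¹ *ᵥ b) = (Sig⁻¹ *ᵥ a) ⬝ᵥ b := by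
    intro a b
    rw [Matrix.dotProduct_mulVec, ← Matrix.mulVec_transpose, hT]
  -- Sig *ᵥ e = cZA
  have hSigE : Sig *ᵥ e = cZA := by
    rw [he, Matrix.mulVec_single]
    funext i
    rw [hSig, hcZA, hA]
    simp
  have hinvA : Sig⁻¹ *ᵥ cZA = e := by
    rw [← hSigE, Matrix.mulVec_mulVec, Matrix.nonsing_inv_mul _ hdet, Matrix.one_mulVec]
  -- v as vector combination
  have hvvec : v = cZA - (c / V) • cZY := by
    funext i
    simp [hv, smul_eq_mul, mul_comm]
  -- cov Rhat Y = wh ⬝ᵥ cZY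
  have hrw : r = wh ⬝ᵥ cZY := by
    rw [hr]
    unfold cov
    rw [hRhat]
    simp_rw [Finset.sum_mul, mul_assoc]
    rw [integral_finset_sum _ (fun i _ =>
      ((integrable_mul_of_memL2 (hZ2 i) hY2).const_mul (wh i)))]
    simp_rw [integral_const_mul]
    simp [dotProduct, hcZY, cov]
  -- last components
  have hcZYlast : cZY (Fin.last d) = c := by
    rw [hcZY]
    show cov μ (Z (Fin.last d)) Y = c
    rw [← hA, hc]
    exact cov_comm μ A Y
  have hcZAlast : cZA (Fin.last d) = cov μ A A := by
    rw [hcZA]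
    show cov μ (Z (Fin.last d)) A = cov μ A A
    rw [← hA]
  -- v ⬝ Sig⁻¹ cZY
  have hnum : v ⬝ᵥ (Sig⁻¹ *ᵥ cZY) = c - (c / V) * r := by
    rw [hvvec, sub_dotProduct, smul_dotProduct]
    rw [hdotsym cZA cZY, hinvA, single_dotProduct, one_mul, hcZYlast]
    rw [← hwh, dotProduct_comm, ← hrw]
    simp
  have hden : v ⬝ᵥ (Sig⁻¹ *ᵥ v) = cov μ A A - c * (c / V) - (c / V) * (c - (c / V) * r) := by
    have h2 : Sig⁻¹ *ᵥ v = e - (c / V) • wh := by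
      rw [hvvec, Matrix.mulVec_sub, Matrix.mulVec_smul, hinvA, hwh]
    rw [h2, dotProduct_sub, dotProduct_smul]
    have hve : v ⬝ᵥ e = cov μ A A - c * (c / V) := by
      rw [he, dotProduct_single, mul_one, hvvec]
      simp only [Pi.sub_apply, Pi.smul_apply, smul_eq_mul, hcZAlast, hcZYlast]
      ring
    have hvwh : v ⬝ᵥ wh = c - (c / V) * r := by
      rw [hwh, hnum]
    rw [hve, hvwh]
    simp
  -- αc equals the target fraction
  have hαeq : αc = (c - r * c / V) / (cov μ A A - 2 * c ^ 2 / V + r * c ^ 2 / V ^ 2) := by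
    rw [hα, hnum, hden]
    congr 1
    · field_simp
    · field_simp
      ring
  intro ω
  -- pointwise identity
  have hwvec : w = wh - αc • (e - (c / V) • wh) := by
    rw [hw, Matrix.mulVec_sub, Matrix.mulVec_smul, ← hwh]
    congr 1
    rw [hvvec, Matrix.mulVec_sub, Matrix.mulVec_smul, hinvA, hwh]
  have hAsum : ∑ i, e i * Z i ω = A ω := by
    rw [hA, he]
    simp [Pi.single_apply, Finset.sum_ite_eq']
  rw [hwvec, ← hαeq]
  simp only [Pi.sub_apply, Pi.smul_apply, smul_eq_mul]
  have : ∑ i, (wh i - αc * (e i - c / V * wh i)) * Z i ω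
      = (∑ i, wh i * Z i ω) - αc * ((∑ i, e i * Z i ω) - c / V * ∑ i, wh i * Z i ω) := by
    simp only [mul_sub, Finset.mul_sum, ← Finset.sum_sub_distrib]
    apply Finset.sum_congr rfl
    intro i _
    ring
  rw [this, hAsum]
  simp only [hRhat]
  ring
end

section
/- Under D_ε, the constrained predictor h(X) = (1/2 − 2ε)X + 1/4 + ε has expected squared loss E[(h(X)−Y)²] = 1/16 + (3/2)ε + 3ε², and being a function of X alone (with X⊥A|Y), it satisfies equalized odds. -/
/-- `{0,1}`-valued random variables as reals. -/
def ind (b : Bool) : ℝ := if b then 1 else 0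

theorem mul_div_sum_mul_left {ι K : Type*} [Fintype ι] [Field K] {c : K} (hc : c ≠ 0)
    (f : ι → K) (i : ι) : c * f i / ∑ j, c * f j = f i / ∑ j, f j := by
  rw [← Finset.mul_sum, mul_div_mul_left _ _ hc]

namespace DEps

variable (ε : ℝ)

/-- `P(A = a | Y = y)` under `D_ε`. -/
noncomputable def condA (a y : Bool) : ℝ := if a = y then 1 - ε else ε

/-- `P(X = x | Y = y)` under `D_ε`. -/
noncomputable def condX (x y : Bool) : ℝ := if x = y then 1 - 2 * ε else 2 * ε

theorem pD_eq_mul_condX (x a y : Bool) : pD ε x a y = (1 / 2 * condA ε a y) * condX ε x y :=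
  rfl

theorem sum_condX (y : Bool) : ∑ x, condX ε x y = 1 := by
  cases y <;> simp [condX]

theorem condA_ne_zero {ε : ℝ} (hε0 : ε ≠ 0) (hε1 : ε ≠ 1) (a y : Bool) : condA ε a y ≠ 0 := by
  unfold condA
  split_ifs
  · exact sub_ne_zero.mpr hε1.symm
  · exact hε0

theorem pD_div_sum_pD {ε : ℝ} (hε0 : ε ≠ 0) (hε1 : ε ≠ 1) (x a y : Bool) :
    pD ε x a y / ∑ x', pD ε x' a y = condX ε x y := by
  have hc : 1 / 2 * condA ε a y ≠ 0 := mul_ne_zero (by norm_num) (condA_ne_zero hε0 hε1 a y)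
  simp only [pD_eq_mul_condX]
  rw [mul_div_sum_mul_left hc (condX ε · y) x, sum_condX, div_one]

theorem sum_pD_mul_sq_error :
    (∑ x : Bool, ∑ a : Bool, ∑ y : Bool,
        pD ε x a y * ((1 / 2 - 2 * ε) * ind x + (1 / 4 + ε) - ind y) ^ 2)
      = 1 / 16 + 3 / 2 * ε - 3 * ε ^ 2 := by
  simp only [Fintype.sum_bool, pD, ind]
  norm_num
  ring

end DEps

open DEps in
/-- Under `D_ε` with `0 < ε < 1/4`, the predictor `h(X) = (1/2 - 2ε) X + 1/4 + ε` has
expected squared loss at most `1/16 + (3/2)ε + 3ε²`, and, being a function of `X` alone with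
`X ⟂ A | Y`, it satisfies equalized odds: `P(X = x | Y = y, A = 0) = P(X = x | Y = y, A = 1)`
for all `x, y`. -/
theorem stmt16 (ε : ℝ) (hε0 : 0 < ε) (hε1 : ε < 1 / 4) :
    (∑ x : Bool, ∑ a : Bool, ∑ y : Bool,
        pD ε x a y * ((1 / 2 - 2 * ε) * ind x + (1 / 4 + ε) - ind y) ^ 2)
      ≤ 1 / 16 + 3 / 2 * ε + 3 * ε ^ 2 ∧
    (∀ x y : Bool,
      pD ε x false y / (∑ x' : Bool, pD ε x' false y)
        = pD ε x true y / (∑ x' : Bool, pD ε x' true y)) := by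
  have hne0 : ε ≠ 0 := hε0.ne'
  have hne1 : ε ≠ 1 := by linarith
  refine ⟨?_, fun x y => ?_⟩
  · rw [sum_pD_mul_sq_error]
    nlinarith [sq_nonneg ε]
  · rw [pD_div_sum_pD hne0 hne1, pD_div_sum_pD hne0 hne1]
end

section
/- Under D_ε, the 1-sparse predictor h(X) = (1−4ε)X + 2ε achieves expected squared loss E[(h(X)−Y)²] = 2ε − 4ε² and satisfies equalized odds. -/
lemma sum_pD_fst (ε : ℝ) (a y : Bool) :
    ∑ x : Bool, pD ε x a y = (1 / 2) * (if a = y then 1 - ε else ε) := by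
  cases a <;> cases y <;> simp only [Fintype.sum_bool, pD] <;> norm_num <;> ring

/-- `X ⊥ A | Y`: conditioning on `A` as well as `Y` leaves the law of `X` unchanged. -/
lemma pD_div_sum_pD_fst {ε : ℝ} (hε : ε ≠ 0) (hε' : 1 - ε ≠ 0) (x a y : Bool) :
    pD ε x a y / ∑ x' : Bool, pD ε x' a y = if x = y then 1 - 2 * ε else 2 * ε := by
  have hmarg : (1 / 2 : ℝ) * (if a = y then 1 - ε else ε) ≠ 0 := by
    split_ifs <;> simp [hε, hε']
  rw [sum_pD_fst, pD, mul_div_cancel_left₀ _ hmarg]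

/-- Expanding the square, this is `α² E[X²] + β² + E[Y²] + 2αβ E[X] - 2α E[XY] - 2β E[Y]`
with `E[X] = E[Y] = E[X²] = E[Y²] = 1/2` and `E[XY] = (1 - 2ε)/2`. -/
lemma sum_pD_mul_affine_sub_sq (ε α β : ℝ) :
    ∑ x : Bool, ∑ a : Bool, ∑ y : Bool, pD ε x a y * (α * ind x + β - ind y) ^ 2
      = α ^ 2 / 2 + β ^ 2 + 1 / 2 + α * β - α * (1 - 2 * ε) - β := by
  simp only [Fintype.sum_bool, pD, ind]
  norm_num
  ring

/-- Under `D_ε` with `0 < ε < 1/4`, the 1-sparse predictor `h(X) = (1 - 4ε) X + 2ε` has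
expected squared loss exactly `2ε - 4ε²` and satisfies equalized odds. -/
theorem stmt17 (ε : ℝ) (hε0 : 0 < ε) (hε1 : ε < 1 / 4) :
    (∑ x : Bool, ∑ a : Bool, ∑ y : Bool,
        pD ε x a y * ((1 - 4 * ε) * ind x + 2 * ε - ind y) ^ 2)
      = 2 * ε - 4 * ε ^ 2 ∧
    (∀ x y : Bool,
      pD ε x false y / (∑ x' : Bool, pD ε x' false y)
        = pD ε x true y / (∑ x' : Bool, pD ε x' true y)) := by
  have hε : ε ≠ 0 := hε0.ne'
  have hε' : 1 - ε ≠ 0 := by linarith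
  refine ⟨?_, fun x y => ?_⟩
  · rw [sum_pD_mul_affine_sub_sq]
    ring
  · rw [pD_div_sum_pD_fst hε hε', pD_div_sum_pD_fst hε hε']
end

section
/- Let f' be a real-valued predictor on (X̃,Ã) whose sign is α-discriminatory at threshold 0 under a distribution D̃ with P(Ã=1)=δ and whose Ã=1 conditional matches a distribution D (i.e., P_{D̃}(X̃=[0,x],Ỹ=y|Ã=1)=P_D(X=x,Y=y)). Then the predictor f''(x)=f'([0,x],1) satisfies L^{01}_D(f'') ≤ L^{01}_{D̃}(f') + α(1−δ). -/
/-!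
Split every mass by the group `Ã`. On label `y`, the `Ã = 1` error rate `r₁` times the label
mass `P(Ỹ = y)` is the `Ã = 1` error mass plus `P(Ỹ = y, Ã = 0) · r₁`, and
`α`-discrimination gives `r₁ ≤ r₀ + α`, where `P(Ỹ = y, Ã = 0) · r₀` is the `Ã = 0` error
mass. Summing over both labels, the `Ã = 0` weights add up to `P(Ã = 0) = 1 - δ`. For
`y = +1` the error event is `f' < 0`, whose rates are complementary to those of `f' ≥ 0`.
-/

open MeasureTheory

section

variable {Ω : Type*} [MeasurableSpace Ω] (μ : Measure Ω) [IsFiniteMeasure μ]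

theorem measureReal_mul_div_cancel_of_subset {s t : Set Ω} (hst : s ⊆ t) :
    μ.real t * (μ.real s / μ.real t) = μ.real s :=
  mul_div_cancel_of_imp' fun ht =>
    le_antisymm (ht ▸ measureReal_mono hst) measureReal_nonneg

theorem measureReal_and_false_add_and_true {A : Ω → Bool} (hA : Measurable A) (q : Ω → Prop) :
    μ.real {ω | q ω ∧ A ω = false} + μ.real {ω | q ω ∧ A ω = true} = μ.real {ω | q ω} := by
  have hfalse : {ω | q ω ∧ A ω = false} = {ω | q ω} \ {ω | A ω = true} := by
    ext ω
    simp
  rw [hfalse, add_comm]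
  exact measureReal_inter_add_sdiff (hA (measurableSet_singleton true))

theorem measureReal_eq_and_add_eq_and {β : Type*} {Y : Ω → β} {a b : β} (hab : a ≠ b)
    (hY : ∀ ω, Y ω = a ∨ Y ω = b) (hYa : MeasurableSet {ω | Y ω = a}) (q : Ω → Prop) :
    μ.real {ω | Y ω = a ∧ q ω} + μ.real {ω | Y ω = b ∧ q ω} = μ.real {ω | q ω} := by
  have hb : {ω | Y ω = b ∧ q ω} = {ω | q ω} \ {ω | Y ω = a} := by
    ext ω
    rcases hY ω with h | h <;> simp [h, hab, hab.symm]
  have hsplit := measureReal_inter_add_sdiff (μ := μ) (s := {ω | q ω}) hYa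
  rw [Set.inter_comm] at hsplit
  rw [hb]
  exact hsplit

theorem measureReal_not_and_div {p : Ω → Prop} (hp : MeasurableSet {ω | p ω}) (q : Ω → Prop)
    (hq : μ.real {ω | q ω} ≠ 0) :
    μ.real {ω | ¬p ω ∧ q ω} / μ.real {ω | q ω}
      = 1 - μ.real {ω | p ω ∧ q ω} / μ.real {ω | q ω} := by
  have hsplit : μ.real {ω | p ω ∧ q ω} + μ.real {ω | ¬p ω ∧ q ω} = μ.real {ω | q ω} := by
    have h := measureReal_inter_add_sdiff (μ := μ) (s := {ω | q ω}) hp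
    rw [Set.sdiff_eq, Set.inter_comm, Set.inter_comm _ {ω | p ω}ᶜ] at h
    exact h
  rw [eq_sub_iff_add_eq, ← add_div, add_comm, hsplit, div_self hq]

theorem measureReal_mul_div_le_add_mul (p q : Ω → Prop) {A : Ω → Bool} (hA : Measurable A)
    {α : ℝ}
    (hrate : μ.real {ω | p ω ∧ q ω ∧ A ω = true} / μ.real {ω | q ω ∧ A ω = true}
      - μ.real {ω | p ω ∧ q ω ∧ A ω = false} / μ.real {ω | q ω ∧ A ω = false} ≤ α) :
    μ.real {ω | q ω} *
        (μ.real {ω | p ω ∧ q ω ∧ A ω = true} / μ.real {ω | q ω ∧ A ω = true})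
      ≤ μ.real {ω | p ω ∧ q ω} + μ.real {ω | q ω ∧ A ω = false} * α := by
  set w₀ := μ.real {ω | q ω ∧ A ω = false}
  set w₁ := μ.real {ω | q ω ∧ A ω = true}
  set e₀ := μ.real {ω | p ω ∧ q ω ∧ A ω = false}
  set e₁ := μ.real {ω | p ω ∧ q ω ∧ A ω = true}
  have hw : μ.real {ω | q ω} = w₀ + w₁ := (measureReal_and_false_add_and_true μ hA q).symm
  have he : μ.real {ω | p ω ∧ q ω} = e₀ + e₁ := by
    simpa only [and_assoc] using
      (measureReal_and_false_add_and_true μ hA fun ω => p ω ∧ q ω).symm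
  have he₀ : w₀ * (e₀ / w₀) = e₀ := measureReal_mul_div_cancel_of_subset μ fun _ h => h.2
  have he₁ : w₁ * (e₁ / w₁) = e₁ := measureReal_mul_div_cancel_of_subset μ fun _ h => h.2
  calc μ.real {ω | q ω} * (e₁ / w₁) = w₀ * (e₁ / w₁) + e₁ := by rw [hw, add_mul, he₁]
    _ ≤ w₀ * (e₀ / w₀ + α) + e₁ := by
      gcongr
      linarith
    _ = e₀ + e₁ + w₀ * α := by rw [mul_add, he₀]; ring
    _ = μ.real {ω | p ω ∧ q ω} + w₀ * α := by rw [he]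

end

theorem stmt18_general {Ω : Type*} [MeasurableSpace Ω] (μ : Measure Ω) [IsProbabilityMeasure μ]
    (Ytil : Ω → ℝ) (Atil : Ω → Bool) (F : Ω → ℝ)
    (hYm : Measurable Ytil) (hAm : Measurable Atil) (hFm : Measurable F)
    (δ α : ℝ)
    (hYval : ∀ ω, Ytil ω = 1 ∨ Ytil ω = -1)
    (hδ : (μ {ω | Atil ω = true}).toReal = δ)
    (hpos : ∀ y : ℝ, (y = 1 ∨ y = -1) → ∀ a : Bool, 0 < μ {ω | Ytil ω = y ∧ Atil ω = a})
    (hdisc : ∀ y : ℝ, (y = 1 ∨ y = -1) →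
      |(μ {ω | 0 ≤ F ω ∧ Ytil ω = y ∧ Atil ω = false}).toReal
          / (μ {ω | Ytil ω = y ∧ Atil ω = false}).toReal
        - (μ {ω | 0 ≤ F ω ∧ Ytil ω = y ∧ Atil ω = true}).toReal
          / (μ {ω | Ytil ω = y ∧ Atil ω = true}).toReal| ≤ α) :
    (μ {ω | Ytil ω = -1}).toReal *
        ((μ {ω | 0 ≤ F ω ∧ Ytil ω = -1 ∧ Atil ω = true}).toReal
          / (μ {ω | Ytil ω = -1 ∧ Atil ω = true}).toReal)
      + (μ {ω | Ytil ω = 1}).toReal *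
        ((μ {ω | F ω < 0 ∧ Ytil ω = 1 ∧ Atil ω = true}).toReal
          / (μ {ω | Ytil ω = 1 ∧ Atil ω = true}).toReal)
    ≤ ((μ {ω | 0 ≤ F ω ∧ Ytil ω = -1}).toReal + (μ {ω | F ω < 0 ∧ Ytil ω = 1}).toReal)
      + α * (1 - δ) := by
  simp only [← measureReal_def] at hδ hdisc ⊢
  have hdisc_neg := abs_le.1 (hdisc (-1) (Or.inr rfl))
  have hdisc_pos := abs_le.1 (hdisc 1 (Or.inl rfl))
  have hcompl (a : Bool) :=
    measureReal_not_and_div μ (p := fun ω => 0 ≤ F ω) (hFm measurableSet_Ici)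
      (fun ω => Ytil ω = 1 ∧ Atil ω = a)
      (ENNReal.toReal_pos (hpos 1 (Or.inl rfl) a).ne' (measure_ne_top _ _)).ne'
  simp only [not_le] at hcompl
  have hbound_neg :=
    measureReal_mul_div_le_add_mul μ (fun ω => 0 ≤ F ω) (fun ω => Ytil ω = -1) hAm (α := α)
      (by linarith [hdisc_neg.1])
  have hbound_pos :=
    measureReal_mul_div_le_add_mul μ (fun ω => F ω < 0) (fun ω => Ytil ω = 1) hAm (α := α)
      (by rw [hcompl, hcompl]; linarith [hdisc_pos.2])
  have hgroup₀ : μ.real {ω | Ytil ω = 1 ∧ Atil ω = false}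
      + μ.real {ω | Ytil ω = -1 ∧ Atil ω = false} = 1 - δ := by
    have htotal := measureReal_and_false_add_and_true μ hAm fun _ => True
    simp only [true_and, Set.ofPred_true, probReal_univ] at htotal
    rw [measureReal_eq_and_add_eq_and μ (by norm_num) hYval (hYm (measurableSet_singleton 1)),
      ← hδ]
    linarith
  calc _ ≤ _ := add_le_add hbound_neg hbound_pos
    _ = _ := by rw [← hgroup₀]; ring

/-- Post hoc reduction step of the hardness proof.  `F = f'` is a real-valued predictor on a
distribution `μ` over `(X̃, Ã, Ỹ)` whose sign is `α`-discriminatory at threshold `0`, with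
`P(Ã = 1) = δ`, conditional label marginals matching across groups, and the `Ã = 1`
conditional matching the original distribution `D`.  Then the 0-1 loss on `D` of
`f''(x) = f'([0,x], 1)` — expressed via the `Ã = 1` conditionals — is at most
`L^{01}_{D̃}(f') + α(1 - δ)`. -/
theorem stmt18 {Ω : Type*} [MeasurableSpace Ω] (μ : Measure Ω) [IsProbabilityMeasure μ]
    (Ytil : Ω → ℝ) (Atil : Ω → Bool) (F : Ω → ℝ)
    (hYm : Measurable Ytil) (hAm : Measurable Atil) (hFm : Measurable F)
    (δ α : ℝ)
    (hYval : ∀ ω, Ytil ω = 1 ∨ Ytil ω = -1)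
    (hδ : (μ {ω | Atil ω = true}).toReal = δ)
    (hpos : ∀ y : ℝ, (y = 1 ∨ y = -1) → ∀ a : Bool, 0 < μ {ω | Ytil ω = y ∧ Atil ω = a})
    (hdisc : ∀ y : ℝ, (y = 1 ∨ y = -1) →
      |(μ {ω | 0 ≤ F ω ∧ Ytil ω = y ∧ Atil ω = false}).toReal
          / (μ {ω | Ytil ω = y ∧ Atil ω = false}).toReal
        - (μ {ω | 0 ≤ F ω ∧ Ytil ω = y ∧ Atil ω = true}).toReal
          / (μ {ω | Ytil ω = y ∧ Atil ω = true}).toReal| ≤ α)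
    (hmatch : ∀ y : ℝ, (y = 1 ∨ y = -1) →
      (μ {ω | Ytil ω = y ∧ Atil ω = false}).toReal / (μ {ω | Atil ω = false}).toReal
        = (μ {ω | Ytil ω = y ∧ Atil ω = true}).toReal / (μ {ω | Atil ω = true}).toReal) :
    (μ {ω | Ytil ω = -1}).toReal *
        ((μ {ω | 0 ≤ F ω ∧ Ytil ω = -1 ∧ Atil ω = true}).toReal
          / (μ {ω | Ytil ω = -1 ∧ Atil ω = true}).toReal)
      + (μ {ω | Ytil ω = 1}).toReal *
        ((μ {ω | F ω < 0 ∧ Ytil ω = 1 ∧ Atil ω = true}).toReal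
          / (μ {ω | Ytil ω = 1 ∧ Atil ω = true}).toReal)
    ≤ ((μ {ω | 0 ≤ F ω ∧ Ytil ω = -1}).toReal + (μ {ω | F ω < 0 ∧ Ytil ω = 1}).toReal)
      + α * (1 - δ) :=
  stmt18_general μ Ytil Atil F hYm hAm hFm δ α hYval hδ hpos hdisc
end
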